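/- arXiv:2401.15395 — 3 statements merged into one kernel-verified Lean document; each statement's English description precedes it below -/
import Mathlib

section
/- Consider the fuzzy frame F with W = {w, w', w''}, R(w,w') = R(w,w'') = 2/3 and R = 0 on all other pairs, and the KGinv-model on F in which every propositional variable q satisfies v(q,w) = 1, v(q,w') = 1/5 and v(q,w'') = 1/4. Then v(◇p,w) = 1/4, but there is no ◇-free formula ψ of L_inv (i.e., built only from variables, ¬ᵢ, ∧, →, □) with v(ψ,w) ∈ {1/4, 3/4}. -/
noncomputable def Gimp (x y : ℝ) : ℝ := if x ≤ y then 1 else y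

inductive Fml : Type
  | var : ℕ → Fml
  | inv : Fml → Fml
  | and : Fml → Fml → Fml
  | imp : Fml → Fml → Fml
  | box : Fml → Fml
  | dia : Fml → Fml
  deriving DecidableEq

noncomputable def Fml.eval {W : Type} (R : W → W → ℝ) (v : ℕ → W → ℝ) : Fml → W → ℝ
  | .var p, w => v p w
  | .inv φ, w => 1 - Fml.eval R v φ w
  | .and φ χ, w => min (Fml.eval R v φ w) (Fml.eval R v χ w)
  | .imp φ χ, w => Gimp (Fml.eval R v φ w) (Fml.eval R v χ w)
  | .box φ, w => sInf (Set.range fun w' => Gimp (R w w') (Fml.eval R v φ w'))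
  | .dia φ, w => sSup (Set.range fun w' => min (R w w') (Fml.eval R v φ w'))

def KGinvValid {W : Type} (R : W → W → ℝ) (φ : Fml) : Prop :=
  ∀ v : ℕ → W → ℝ, (∀ p w, v p w ∈ Set.Icc (0:ℝ) 1) → ∀ w : W, Fml.eval R v φ w = 1

noncomputable def R3 : Fin 3 → Fin 3 → ℝ :=
  fun i j => if i = 0 ∧ (j = 1 ∨ j = 2) then 2/3 else 0

noncomputable def v3 : ℕ → Fin 3 → ℝ :=
  fun _ w => if w = 0 then 1 else if w = 1 then 1/5 else 1/4

def DiaFree : Fml → Prop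
  | .var _ => True
  | .inv φ => DiaFree φ
  | .and φ χ => DiaFree φ ∧ DiaFree χ
  | .imp φ χ => DiaFree φ ∧ DiaFree χ
  | .box φ => DiaFree φ
  | .dia _ => False

/-!
At the two dead-end worlds `w'` and `w''` every boxed formula takes the value `1`, so on them
a `◇`-free formula is evaluated by the pointwise operations `1 - x`, `min` and `⇒` alone.
These commute with any strictly monotone map fixing `1` and commuting with `1 - x`, such as
`0 ↦ 0, 1/5 ↦ 1/4, 4/5 ↦ 3/4, 1 ↦ 1`; hence the value at `w''` is always the image of the value
at `w'`, which lies in `{0, 1/5, 4/5, 1}`. At `w` the box then evaluates to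
`2/3 ⇒ v(φ, w')`, because `2/3 ⇒ v(φ, w'') ≥ 2/3 ⇒ v(φ, w')` for such values, and so every
`◇`-free formula takes a value in `{0, 1/5, 4/5, 1}` at `w` as well, never `1/4` or `3/4`.
The value `1/4` of `◇p` at `w` comes from `w''`.
-/

theorem Gimp_of_le {x y : ℝ} (h : x ≤ y) : Gimp x y = 1 := if_pos h

theorem Gimp_mem {S : Set ℝ} (x : ℝ) {y : ℝ} (h1 : (1 : ℝ) ∈ S) (hy : y ∈ S) : Gimp x y ∈ S := by
  unfold Gimp; split_ifs <;> assumption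

theorem StrictMonoOn.Gimp_comp {σ : ℝ → ℝ} {S : Set ℝ} (hσ : StrictMonoOn σ S) (h1 : σ 1 = 1)
    {x y : ℝ} (hx : x ∈ S) (hy : y ∈ S) : Gimp (σ x) (σ y) = σ (Gimp x y) := by
  unfold Gimp
  by_cases h : x ≤ y <;> simp [h, hσ.le_iff_le hx hy, h1]

theorem MonotoneOn.map_min_of_mem {σ : ℝ → ℝ} {S : Set ℝ} (hσ : MonotoneOn σ S) {x y : ℝ}
    (hx : x ∈ S) (hy : y ∈ S) : σ (min x y) = min (σ x) (σ y) := by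
  rcases le_total x y with h | h
  · rw [min_eq_left h, min_eq_left (hσ hx hy h)]
  · rw [min_eq_right h, min_eq_right (hσ hy hx h)]

theorem Fml.eval_box_eq_one {W : Type} [Nonempty W] {R : W → W → ℝ} {v : ℕ → W → ℝ} {φ : Fml}
    {w : W} (h : ∀ w', R w w' ≤ Fml.eval R v φ w') : Fml.eval R v (.box φ) w = 1 := by
  have hconst : (fun w' => Gimp (R w w') (Fml.eval R v φ w')) = fun _ => 1 :=
    funext fun w' => Gimp_of_le (h w')
  simp only [Fml.eval, hconst, Set.range_const, csInf_singleton]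

theorem Fml.eval_box_fin_three (R : Fin 3 → Fin 3 → ℝ) (v : ℕ → Fin 3 → ℝ) (φ : Fml) (w : Fin 3) :
    Fml.eval R v (.box φ) w = min (Gimp (R w 0) (Fml.eval R v φ 0))
      (min (Gimp (R w 1) (Fml.eval R v φ 1)) (Gimp (R w 2) (Fml.eval R v φ 2))) := by
  simp only [Fml.eval, Fin.range_fin_succ, Fin.tail, Set.range_unique]
  rw [csInf_insert (Set.toFinite _).bddBelow (Set.insert_nonempty _ _), csInf_pair]
  rfl

def fifths : Set ℝ := {0, 1/5, 4/5, 1}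

noncomputable def fifthsToQuarters (x : ℝ) : ℝ :=
  if x = 1/5 then 1/4 else if x = 4/5 then 3/4 else x

theorem one_sub_mem_fifths {x : ℝ} (hx : x ∈ fifths) : 1 - x ∈ fifths := by
  rcases hx with rfl | rfl | rfl | rfl <;> norm_num [fifths]

theorem fifthsToQuarters_strictMonoOn : StrictMonoOn fifthsToQuarters fifths := by
  rintro x (rfl | rfl | rfl | rfl) y (rfl | rfl | rfl | rfl) <;> norm_num [fifthsToQuarters]

theorem fifthsToQuarters_one_sub {x : ℝ} (hx : x ∈ fifths) :
    fifthsToQuarters (1 - x) = 1 - fifthsToQuarters x := by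
  rcases hx with rfl | rfl | rfl | rfl <;> norm_num [fifthsToQuarters]

theorem fifthsToQuarters_one : fifthsToQuarters 1 = 1 := by norm_num [fifthsToQuarters]

theorem nonneg_of_mem_fifths {x : ℝ} (hx : x ∈ fifths) : 0 ≤ x := by
  rcases hx with rfl | rfl | rfl | rfl <;> norm_num

def Admissible (f : Fin 3 → ℝ) : Prop :=
  f 0 ∈ fifths ∧ f 1 ∈ fifths ∧ f 2 = fifthsToQuarters (f 1)

namespace Admissible

variable {f g : Fin 3 → ℝ}

theorem nonneg (h : Admissible f) (i : Fin 3) : 0 ≤ f i := by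
  obtain ⟨h0, h1, h2⟩ := h
  fin_cases i
  · exact nonneg_of_mem_fifths h0
  · exact nonneg_of_mem_fifths h1
  · have h0q : fifthsToQuarters 0 = 0 := by norm_num [fifthsToQuarters]
    simpa [h2, h0q] using fifthsToQuarters_strictMonoOn.monotoneOn (by simp [fifths]) h1
      (nonneg_of_mem_fifths h1)

theorem one_sub (h : Admissible f) : Admissible fun i => 1 - f i := by
  obtain ⟨h0, h1, h2⟩ := h
  refine ⟨one_sub_mem_fifths h0, one_sub_mem_fifths h1, ?_⟩
  simp only [h2, fifthsToQuarters_one_sub h1]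

theorem min (hf : Admissible f) (hg : Admissible g) : Admissible fun i => min (f i) (g i) := by
  obtain ⟨hf0, hf1, hf2⟩ := hf
  obtain ⟨hg0, hg1, hg2⟩ := hg
  refine ⟨?_, ?_, ?_⟩ <;> dsimp only
  · rcases min_choice (f 0) (g 0) with h | h <;> rw [h] <;> assumption
  · rcases min_choice (f 1) (g 1) with h | h <;> rw [h] <;> assumption
  · rw [hf2, hg2, fifthsToQuarters_strictMonoOn.monotoneOn.map_min_of_mem hf1 hg1]

theorem gimp (hf : Admissible f) (hg : Admissible g) : Admissible fun i => Gimp (f i) (g i) := by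
  obtain ⟨hf0, hf1, hf2⟩ := hf
  obtain ⟨hg0, hg1, hg2⟩ := hg
  have h1 : (1 : ℝ) ∈ fifths := by simp [fifths]
  refine ⟨Gimp_mem _ h1 hg0, Gimp_mem _ h1 hg1, ?_⟩
  dsimp only
  rw [hf2, hg2, fifthsToQuarters_strictMonoOn.Gimp_comp fifthsToQuarters_one hf1 hg1]

theorem eval_box {φ : Fml} (h : Admissible (Fml.eval R3 v3 φ)) :
    Admissible (Fml.eval R3 v3 (.box φ)) := by
  have hdead : ∀ i : Fin 3, i ≠ 0 → Fml.eval R3 v3 (.box φ) i = 1 := fun i hi =>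
    Fml.eval_box_eq_one fun j => by simpa [R3, hi] using h.nonneg j
  refine ⟨?_, ?_, ?_⟩
  · obtain ⟨-, h1, h2⟩ := id h
    have hR : R3 0 0 = 0 ∧ R3 0 1 = 2/3 ∧ R3 0 2 = 2/3 := by norm_num [R3, Fin.ext_iff]
    rw [Fml.eval_box_fin_three, hR.1, hR.2.1, hR.2.2, Gimp_of_le (h.nonneg 0), h2]
    simp only [fifths, Set.mem_insert_iff, Set.mem_singleton_iff] at h1
    rcases h1 with h1 | h1 | h1 | h1 <;> rw [h1] <;> norm_num [Gimp, fifthsToQuarters, fifths]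
  · simp [hdead, fifths]
  · simp [hdead, fifthsToQuarters_one]

end Admissible

theorem admissible_eval_of_diaFree : ∀ ψ : Fml, DiaFree ψ → Admissible (Fml.eval R3 v3 ψ)
  | .var _, _ => by norm_num [Admissible, Fml.eval, v3, fifths, fifthsToQuarters, Fin.ext_iff]
  | .inv φ, h => (admissible_eval_of_diaFree φ h).one_sub
  | .and φ χ, h => (admissible_eval_of_diaFree φ h.1).min (admissible_eval_of_diaFree χ h.2)
  | .imp φ χ, h => (admissible_eval_of_diaFree φ h.1).gimp (admissible_eval_of_diaFree χ h.2)
  | .box φ, h => (admissible_eval_of_diaFree φ h).eval_box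

theorem eval_dia_var_zero (p : ℕ) : Fml.eval R3 v3 (.dia (.var p)) 0 = 1/4 := by
  refine IsGreatest.csSup_eq ⟨⟨2, by norm_num [R3, v3, Fml.eval, Fin.ext_iff]⟩, ?_⟩
  rintro _ ⟨j, rfl⟩
  fin_cases j <;> norm_num [R3, v3, Fml.eval, Fin.ext_iff]

theorem statement2 :
    Fml.eval R3 v3 (.dia (.var 0)) 0 = 1/4 ∧
    ¬ ∃ ψ : Fml, DiaFree ψ ∧
      (Fml.eval R3 v3 ψ 0 = 1/4 ∨ Fml.eval R3 v3 ψ 0 = 3/4) := by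
  refine ⟨eval_dia_var_zero 0, ?_⟩
  rintro ⟨ψ, hψ, hval⟩
  have hfifths := (admissible_eval_of_diaFree ψ hψ).1
  rcases hval with h | h <;> rw [h] at hfifths <;> norm_num [fifths] at hfifths
end

section
/- Consider the fuzzy frame F with W = {w, w', w''}, R(w,w') = R(w,w'') = 2/3 and R = 0 on all other pairs, and the KGinv-model on F in which every propositional variable q satisfies v(q,w) = 1, v(q,w') = 1/5 and v(q,w'') = 1/4. Then for every formula τ ∈ L_inv: v(τ,w') ∈ {0, 1/5, 4/5, 1} and v(τ,w'') ∈ {0, 1/4, 3/4, 1}. -/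
/-!
Worlds 1 and 2 have no successors, so there every `□φ` takes the value 1 and every `◇φ` the
value 0. Since the Gödel connectives `∧` and `→` always return one of their arguments or 1, the
values at such a world stay inside any set that contains 0, 1 and the values of the variables and
is closed under the involutive negation `x ↦ 1 - x`; for world 1 this is `{0, 1/5, 4/5, 1}` and
for world 2 it is `{0, 1/4, 3/4, 1}`.
-/

open Set

lemma Gimp_eq_one_or_eq (x y : ℝ) : Gimp x y = 1 ∨ Gimp x y = y := by
  unfold Gimp
  split_ifs <;> simp

namespace Fml

variable {W : Type} {R : W → W → ℝ} {v : ℕ → W → ℝ}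

theorem eval_mem_Icc (hR : ∀ w w', 0 ≤ R w w') (hv : ∀ p w, v p w ∈ Icc (0 : ℝ) 1) (φ : Fml)
    (w : W) : φ.eval R v w ∈ Icc (0 : ℝ) 1 := by
  induction φ generalizing w with
  | var p => exact hv p w
  | inv φ ih => exact Icc.mem_iff_one_sub_mem.mp (ih w)
  | and φ χ ihφ ihχ =>
    rcases min_choice (φ.eval R v w) (χ.eval R v w) with h | h <;> rw [eval, h]
    exacts [ihφ w, ihχ w]
  | imp φ χ _ ihχ =>
    rcases Gimp_eq_one_or_eq (φ.eval R v w) (χ.eval R v w) with h | h <;> rw [eval, h]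
    exacts [right_mem_Icc.2 zero_le_one, ihχ w]
  | box φ ih =>
    have hGimp : ∀ w', Gimp (R w w') (φ.eval R v w') ∈ Icc (0 : ℝ) 1 := fun w' => by
      rcases Gimp_eq_one_or_eq (R w w') (φ.eval R v w') with h | h <;> rw [h]
      exacts [right_mem_Icc.2 zero_le_one, ih w']
    have hbdd : BddBelow (range fun w' => Gimp (R w w') (φ.eval R v w')) :=
      ⟨0, forall_mem_range.2 fun w' => (hGimp w').1⟩
    exact ⟨Real.iInf_nonneg fun w' => (hGimp w').1, (ciInf_le hbdd w).trans (hGimp w).2⟩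
  | dia φ ih =>
    have hmin : ∀ w', min (R w w') (φ.eval R v w') ∈ Icc (0 : ℝ) 1 := fun w' =>
      ⟨le_min (hR w w') (ih w').1, (min_le_right _ _).trans (ih w').2⟩
    exact ⟨Real.iSup_nonneg fun w' => (hmin w').1, Real.iSup_le (fun w' => (hmin w').2) zero_le_one⟩

theorem eval_box_of_forall_eq_zero {w : W} (hw : ∀ w', R w w' = 0) {φ : Fml}
    (hφ : ∀ w', 0 ≤ φ.eval R v w') : (box φ).eval R v w = 1 := by
  have hconst : (fun w' => Gimp (R w w') (φ.eval R v w')) = fun _ => 1 := by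
    funext w'
    rw [hw, Gimp, if_pos (hφ w')]
  have : Nonempty W := ⟨w⟩
  rw [eval, hconst, range_const, csInf_singleton]

theorem eval_dia_of_forall_eq_zero {w : W} (hw : ∀ w', R w w' = 0) {φ : Fml}
    (hφ : ∀ w', 0 ≤ φ.eval R v w') : (dia φ).eval R v w = 0 := by
  have hconst : (fun w' => min (R w w') (φ.eval R v w')) = fun _ => 0 := by
    funext w'
    rw [hw, min_eq_left (hφ w')]
  have : Nonempty W := ⟨w⟩
  rw [eval, hconst, range_const, csSup_singleton]

theorem eval_mem_of_forall_eq_zero (hR : ∀ w w', 0 ≤ R w w')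
    (hv : ∀ p w, v p w ∈ Icc (0 : ℝ) 1) {w : W} (hw : ∀ w', R w w' = 0) {S : Set ℝ}
    (h0 : 0 ∈ S) (h1 : 1 ∈ S) (hneg : ∀ x ∈ S, 1 - x ∈ S) (hvS : ∀ p, v p w ∈ S) (φ : Fml) :
    φ.eval R v w ∈ S := by
  induction φ with
  | var p => exact hvS p
  | inv φ ih => exact hneg _ ih
  | and φ χ ihφ ihχ =>
    rcases min_choice (φ.eval R v w) (χ.eval R v w) with h | h <;> rw [eval, h]
    exacts [ihφ, ihχ]
  | imp φ χ _ ihχ =>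
    rcases Gimp_eq_one_or_eq (φ.eval R v w) (χ.eval R v w) with h | h <;> rw [eval, h]
    exacts [h1, ihχ]
  | box φ =>
    rw [eval_box_of_forall_eq_zero hw fun w' => (eval_mem_Icc hR hv φ w').1]
    exact h1
  | dia φ =>
    rw [eval_dia_of_forall_eq_zero hw fun w' => (eval_mem_Icc hR hv φ w').1]
    exact h0

end Fml

lemma R3_nonneg (w w' : Fin 3) : 0 ≤ R3 w w' := by
  unfold R3
  split_ifs <;> norm_num

lemma v3_mem_Icc (p : ℕ) (w : Fin 3) : v3 p w ∈ Icc (0 : ℝ) 1 := by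
  unfold v3
  split_ifs <;> norm_num

lemma R3_eq_zero {w : Fin 3} (hw : w ≠ 0) (w' : Fin 3) : R3 w w' = 0 := by
  simp [R3, hw]

lemma one_sub_mem_quad (a : ℝ) :
    ∀ x ∈ ({0, a, 1 - a, 1} : Set ℝ), 1 - x ∈ ({0, a, 1 - a, 1} : Set ℝ) := by
  rintro x (rfl | rfl | rfl | rfl) <;> simp

theorem statement3 (τ : Fml) :
    Fml.eval R3 v3 τ 1 ∈ ({0, 1/5, 4/5, 1} : Set ℝ) ∧
    Fml.eval R3 v3 τ 2 ∈ ({0, 1/4, 3/4, 1} : Set ℝ) := by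
  have h1 : ({0, 1/5, 4/5, 1} : Set ℝ) = {0, 1/5, 1 - 1/5, 1} := by norm_num
  have h2 : ({0, 1/4, 3/4, 1} : Set ℝ) = {0, 1/4, 1 - 1/4, 1} := by norm_num
  rw [h1, h2]
  constructor <;>
    exact Fml.eval_mem_of_forall_eq_zero R3_nonneg v3_mem_Icc (R3_eq_zero (by decide))
      (by simp) (by simp) (one_sub_mem_quad _) (fun p => by simp [v3]) τ
end

section
/- Let ⟨F,w⟩ = ⟨⟨W,R⁺,R⁻⟩,w⟩ be a bi-relational pointed fuzzy frame and χ ∈ Lbl. Then χ is strongly valid on ⟨F,w⟩ in KGbl if and only if χ⊕ ∧ ∼(χ⊖) is KGinv(2)-valid on ⟨F,w⟩. -/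
inductive Fml2 : Type
  | var : ℕ → Fml2
  | inv : Fml2 → Fml2
  | and : Fml2 → Fml2 → Fml2
  | imp : Fml2 → Fml2 → Fml2
  | box1 : Fml2 → Fml2
  | dia1 : Fml2 → Fml2
  | box2 : Fml2 → Fml2
  | dia2 : Fml2 → Fml2

noncomputable def Fml2.eval {W : Type} (Rp Rm : W → W → ℝ) (v : ℕ → W → ℝ) : Fml2 → W → ℝ
  | .var p, w => v p w
  | .inv φ, w => 1 - Fml2.eval Rp Rm v φ w
  | .and φ χ, w => min (Fml2.eval Rp Rm v φ w) (Fml2.eval Rp Rm v χ w)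
  | .imp φ χ, w => Gimp (Fml2.eval Rp Rm v φ w) (Fml2.eval Rp Rm v χ w)
  | .box1 φ, w => sInf (Set.range fun w' => Gimp (Rp w w') (Fml2.eval Rp Rm v φ w'))
  | .dia1 φ, w => sSup (Set.range fun w' => min (Rp w w') (Fml2.eval Rp Rm v φ w'))
  | .box2 φ, w => sInf (Set.range fun w' => Gimp (Rm w w') (Fml2.eval Rp Rm v φ w'))
  | .dia2 φ, w => sSup (Set.range fun w' => min (Rm w w') (Fml2.eval Rp Rm v φ w'))

inductive Lbl : Type
  | var : ℕ → Lbl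
  | neg : Lbl → Lbl
  | and : Lbl → Lbl → Lbl
  | imp : Lbl → Lbl → Lbl
  | box : Lbl → Lbl
  | dia : Lbl → Lbl
  | conf : Lbl → Lbl
  | sAnd : Lbl → Lbl → Lbl
  | sImp : Lbl → Lbl → Lbl
  | bbox : Lbl → Lbl
  | bdia : Lbl → Lbl

noncomputable def Lbl.eval {W : Type} (Rp Rm : W → W → ℝ) (v1 v2 : ℕ → W → ℝ) :
    Lbl → W → ℝ × ℝ
  | .var p, w => (v1 p w, v2 p w)
  | .neg φ, w => ((Lbl.eval Rp Rm v1 v2 φ w).2, (Lbl.eval Rp Rm v1 v2 φ w).1)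
  | .conf φ, w => (1 - (Lbl.eval Rp Rm v1 v2 φ w).2, 1 - (Lbl.eval Rp Rm v1 v2 φ w).1)
  | .and φ χ, w =>
      (min (Lbl.eval Rp Rm v1 v2 φ w).1 (Lbl.eval Rp Rm v1 v2 χ w).1,
       max (Lbl.eval Rp Rm v1 v2 φ w).2 (Lbl.eval Rp Rm v1 v2 χ w).2)
  | .imp φ χ, w =>
      (Gimp (Lbl.eval Rp Rm v1 v2 φ w).1 (Lbl.eval Rp Rm v1 v2 χ w).1,
       if (Lbl.eval Rp Rm v1 v2 χ w).2 ≤ (Lbl.eval Rp Rm v1 v2 φ w).2 then 0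
       else (Lbl.eval Rp Rm v1 v2 χ w).2)
  | .sAnd φ χ, w =>
      (min (Lbl.eval Rp Rm v1 v2 φ w).1 (Lbl.eval Rp Rm v1 v2 χ w).1,
       min (Lbl.eval Rp Rm v1 v2 φ w).2 (Lbl.eval Rp Rm v1 v2 χ w).2)
  | .sImp φ χ, w =>
      (Gimp (Lbl.eval Rp Rm v1 v2 φ w).1 (Lbl.eval Rp Rm v1 v2 χ w).1,
       Gimp (Lbl.eval Rp Rm v1 v2 φ w).2 (Lbl.eval Rp Rm v1 v2 χ w).2)
  | .box φ, w =>
      (sInf (Set.range fun w' => Gimp (Rp w w') (Lbl.eval Rp Rm v1 v2 φ w').1),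
       sSup (Set.range fun w' => min (Rm w w') (Lbl.eval Rp Rm v1 v2 φ w').2))
  | .dia φ, w =>
      (sSup (Set.range fun w' => min (Rp w w') (Lbl.eval Rp Rm v1 v2 φ w').1),
       sInf (Set.range fun w' => Gimp (Rm w w') (Lbl.eval Rp Rm v1 v2 φ w').2))
  | .bbox φ, w =>
      (sInf (Set.range fun w' => Gimp (Rp w w') (Lbl.eval Rp Rm v1 v2 φ w').1),
       sInf (Set.range fun w' => Gimp (Rm w w') (Lbl.eval Rp Rm v1 v2 φ w').2))
  | .bdia φ, w =>
      (sSup (Set.range fun w' => min (Rp w w') (Lbl.eval Rp Rm v1 v2 φ w').1),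
       sSup (Set.range fun w' => min (Rm w w') (Lbl.eval Rp Rm v1 v2 φ w').2))

/-- KGinv(2)-validity on a pointed frame. -/
def Valid2 {W : Type} (Rp Rm : W → W → ℝ) (φ : Fml2) (w : W) : Prop :=
  ∀ v : ℕ → W → ℝ, (∀ p u, v p u ∈ Set.Icc (0:ℝ) 1) → Fml2.eval Rp Rm v φ w = 1

/-- v₁-validity on a pointed frame. -/
def V1Valid {W : Type} (Rp Rm : W → W → ℝ) (φ : Lbl) (w : W) : Prop :=
  ∀ v1 v2 : ℕ → W → ℝ, (∀ p u, v1 p u ∈ Set.Icc (0:ℝ) 1) →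
    (∀ p u, v2 p u ∈ Set.Icc (0:ℝ) 1) → (Lbl.eval Rp Rm v1 v2 φ w).1 = 1

/-- v₂-validity on a pointed frame. -/
def V2Valid {W : Type} (Rp Rm : W → W → ℝ) (φ : Lbl) (w : W) : Prop :=
  ∀ v1 v2 : ℕ → W → ℝ, (∀ p u, v1 p u ∈ Set.Icc (0:ℝ) 1) →
    (∀ p u, v2 p u ∈ Set.Icc (0:ℝ) 1) → (Lbl.eval Rp Rm v1 v2 φ w).2 = 0

/-- Strong validity on a pointed frame. -/
def StrongValid {W : Type} (Rp Rm : W → W → ℝ) (φ : Lbl) (w : W) : Prop :=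
  V1Valid Rp Rm φ w ∧ V2Valid Rp Rm φ w

def Fml2.or (φ χ : Fml2) : Fml2 := .inv (.and (.inv φ) (.inv χ))
def Fml2.coimp (φ χ : Fml2) : Fml2 := .inv (.imp (.inv χ) (.inv φ))
def Fml2.One : Fml2 := .imp (.var 0) (.var 0)
def Fml2.Zero : Fml2 := .inv Fml2.One
def Fml2.snot (φ : Fml2) : Fml2 := .imp φ Fml2.Zero

/-- The pair of translations (⊕, ⊖) : Lbl → L_inv(2); a variable p is encoded as
`var (2*p)` and its fresh copy p* as `var (2*p+1)`. -/
def Lbl.tr : Lbl → Fml2 × Fml2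
  | .var p => (.var (2*p), .var (2*p+1))
  | .neg φ => (φ.tr.2, φ.tr.1)
  | .conf φ => (.inv φ.tr.2, .inv φ.tr.1)
  | .and φ χ => (.and φ.tr.1 χ.tr.1, Fml2.or φ.tr.2 χ.tr.2)
  | .sAnd φ χ => (.and φ.tr.1 χ.tr.1, .and φ.tr.2 χ.tr.2)
  | .imp φ χ => (.imp φ.tr.1 χ.tr.1, Fml2.coimp χ.tr.2 φ.tr.2)
  | .sImp φ χ => (.imp φ.tr.1 χ.tr.1, .imp φ.tr.2 χ.tr.2)
  | .box φ => (.box1 φ.tr.1, .dia2 φ.tr.2)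
  | .dia φ => (.dia1 φ.tr.1, .box2 φ.tr.2)
  | .bbox φ => (.box1 φ.tr.1, .box2 φ.tr.2)
  | .bdia φ => (.dia1 φ.tr.1, .dia2 φ.tr.2)

/-- The ⊕ translation. -/
def Lbl.pos (φ : Lbl) : Fml2 := φ.tr.1
/-- The ⊖ translation. -/
def Lbl.negt (φ : Lbl) : Fml2 := φ.tr.2

section Aux
variable {W : Type} [Nonempty W]

lemma sInf_range_mem_Icc {f : W → ℝ} (hf : ∀ x, f x ∈ Set.Icc (0:ℝ) 1) :
    sInf (Set.range f) ∈ Set.Icc (0:ℝ) 1 := by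
  constructor
  · exact le_csInf (Set.range_nonempty f) (by rintro b ⟨x, rfl⟩; exact (hf x).1)
  · exact csInf_le_of_le ⟨0, by rintro b ⟨x, rfl⟩; exact (hf x).1⟩
      ⟨Classical.arbitrary W, rfl⟩ (hf (Classical.arbitrary W)).2

lemma sSup_range_mem_Icc {f : W → ℝ} (hf : ∀ x, f x ∈ Set.Icc (0:ℝ) 1) :
    sSup (Set.range f) ∈ Set.Icc (0:ℝ) 1 := by
  constructor
  · exact le_csSup_of_le ⟨1, by rintro b ⟨x, rfl⟩; exact (hf x).2⟩
      ⟨Classical.arbitrary W, rfl⟩ (hf (Classical.arbitrary W)).1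
  · exact csSup_le (Set.range_nonempty f) (by rintro b ⟨x, rfl⟩; exact (hf x).2)

lemma Gimp_mem_Icc {x y : ℝ} (hy : y ∈ Set.Icc (0:ℝ) 1) : Gimp x y ∈ Set.Icc (0:ℝ) 1 := by
  unfold Gimp; split_ifs
  · exact ⟨zero_le_one, le_refl 1⟩
  · exact hy

lemma eval_mem_Icc (Rp Rm : W → W → ℝ)
    (hRp : ∀ w w', Rp w w' ∈ Set.Icc (0:ℝ) 1)
    (hRm : ∀ w w', Rm w w' ∈ Set.Icc (0:ℝ) 1)
    (v : ℕ → W → ℝ) (hv : ∀ p u, v p u ∈ Set.Icc (0:ℝ) 1) :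
    ∀ φ (w : W), Fml2.eval Rp Rm v φ w ∈ Set.Icc (0:ℝ) 1 := by
  intro φ
  induction φ with
  | var p => exact fun w => hv p w
  | inv φ ih =>
      intro w
      have := ih w
      simp only [Fml2.eval]
      exact ⟨by linarith [this.2], by linarith [this.1]⟩
  | and φ χ ihφ ihχ =>
      intro w
      exact ⟨le_min (ihφ w).1 (ihχ w).1, min_le_of_left_le (ihφ w).2⟩
  | imp φ χ ihφ ihχ =>
      intro w; exact Gimp_mem_Icc (ihχ w)
  | box1 φ ih =>
      intro w; exact sInf_range_mem_Icc (fun w' => Gimp_mem_Icc (ih w'))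
  | dia1 φ ih =>
      intro w
      exact sSup_range_mem_Icc (fun w' =>
        ⟨le_min (hRp w w').1 (ih w').1, min_le_of_left_le (hRp w w').2⟩)
  | box2 φ ih =>
      intro w; exact sInf_range_mem_Icc (fun w' => Gimp_mem_Icc (ih w'))
  | dia2 φ ih =>
      intro w
      exact sSup_range_mem_Icc (fun w' =>
        ⟨le_min (hRm w w').1 (ih w').1, min_le_of_left_le (hRm w w').2⟩)

omit [Nonempty W] in
lemma tr_eval (Rp Rm : W → W → ℝ) (v1 v2 v : ℕ → W → ℝ)
    (h1 : ∀ p u, v (2*p) u = v1 p u) (h2 : ∀ p u, v (2*p+1) u = v2 p u) :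
    ∀ (χ : Lbl) (w : W),
      Fml2.eval Rp Rm v χ.tr.1 w = (Lbl.eval Rp Rm v1 v2 χ w).1 ∧
      Fml2.eval Rp Rm v χ.tr.2 w = (Lbl.eval Rp Rm v1 v2 χ w).2 := by
  intro χ
  induction χ with
  | var p =>
      intro w
      simp [Lbl.tr, Lbl.eval, Fml2.eval, h1, h2]
  | neg φ ih =>
      intro w
      simpa [Lbl.tr, Lbl.eval, and_comm] using ih w
  | conf φ ih =>
      intro w
      simp only [Lbl.tr, Lbl.eval, Fml2.eval]
      rw [(ih w).1, (ih w).2]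
      exact ⟨rfl, rfl⟩
  | and φ χ ihφ ihχ =>
      intro w
      simp only [Lbl.tr, Lbl.eval, Fml2.eval, Fml2.or]
      rw [(ihφ w).1, (ihχ w).1, (ihφ w).2, (ihχ w).2]
      refine ⟨rfl, ?_⟩
      rcases le_total ((Lbl.eval Rp Rm v1 v2 φ w).2) ((Lbl.eval Rp Rm v1 v2 χ w).2) with h | h
      · rw [max_eq_right h, min_eq_right (by linarith)]; ring
      · rw [max_eq_left h, min_eq_left (by linarith)]; ring
  | sAnd φ χ ihφ ihχ =>
      intro w
      simp only [Lbl.tr, Lbl.eval, Fml2.eval]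
      rw [(ihφ w).1, (ihχ w).1, (ihφ w).2, (ihχ w).2]
      exact ⟨rfl, rfl⟩
  | imp φ χ ihφ ihχ =>
      intro w
      simp only [Lbl.tr, Lbl.eval, Fml2.eval, Fml2.coimp]
      rw [(ihφ w).1, (ihχ w).1, (ihφ w).2, (ihχ w).2]
      refine ⟨rfl, ?_⟩
      unfold Gimp
      split_ifs with ha hb hb <;> linarith
  | sImp φ χ ihφ ihχ =>
      intro w
      simp only [Lbl.tr, Lbl.eval, Fml2.eval]
      rw [(ihφ w).1, (ihχ w).1, (ihφ w).2, (ihχ w).2]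
      exact ⟨rfl, rfl⟩
  | box φ ih =>
      intro w
      simp only [Lbl.tr, Lbl.eval, Fml2.eval]
      exact ⟨congrArg sInf (congrArg Set.range (funext fun w' => by rw [(ih w').1])),
             congrArg sSup (congrArg Set.range (funext fun w' => by rw [(ih w').2]))⟩
  | dia φ ih =>
      intro w
      simp only [Lbl.tr, Lbl.eval, Fml2.eval]
      exact ⟨congrArg sSup (congrArg Set.range (funext fun w' => by rw [(ih w').1])),
             congrArg sInf (congrArg Set.range (funext fun w' => by rw [(ih w').2]))⟩
  | bbox φ ih =>
      intro w
      simp only [Lbl.tr, Lbl.eval, Fml2.eval]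
      exact ⟨congrArg sInf (congrArg Set.range (funext fun w' => by rw [(ih w').1])),
             congrArg sInf (congrArg Set.range (funext fun w' => by rw [(ih w').2]))⟩
  | bdia φ ih =>
      intro w
      simp only [Lbl.tr, Lbl.eval, Fml2.eval]
      exact ⟨congrArg sSup (congrArg Set.range (funext fun w' => by rw [(ih w').1])),
             congrArg sSup (congrArg Set.range (funext fun w' => by rw [(ih w').2]))⟩

end Aux

/-- χ is strongly valid on ⟨F,w⟩ iff χ⊕ ∧ ∼(χ⊖) is KGinv(2)-valid on ⟨F,w⟩. -/
theorem statement10 {W : Type} [Nonempty W] (Rp Rm : W → W → ℝ)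
    (hRp : ∀ w w', Rp w w' ∈ Set.Icc (0:ℝ) 1)
    (hRm : ∀ w w', Rm w w' ∈ Set.Icc (0:ℝ) 1)
    (w : W) (χ : Lbl) :
    StrongValid Rp Rm χ w ↔ Valid2 Rp Rm (.and χ.pos (Fml2.snot χ.negt)) w := by
  constructor
  · rintro ⟨h1, h2⟩ v hv
    set v1 : ℕ → W → ℝ := fun p => v (2*p) with hv1def
    set v2 : ℕ → W → ℝ := fun p => v (2*p+1) with hv2def
    have hv1 : ∀ p u, v1 p u ∈ Set.Icc (0:ℝ) 1 := fun p u => hv _ u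
    have hv2 : ∀ p u, v2 p u ∈ Set.Icc (0:ℝ) 1 := fun p u => hv _ u
    have htr := tr_eval Rp Rm v1 v2 v (fun p u => rfl) (fun p u => rfl) χ w
    have hp := h1 v1 v2 hv1 hv2
    have hn := h2 v1 v2 hv1 hv2
    show Fml2.eval Rp Rm v (.and χ.pos (Fml2.snot χ.negt)) w = 1
    simp only [Fml2.eval, Fml2.snot, Fml2.Zero, Fml2.One, Lbl.pos, Lbl.negt]
    rw [htr.1, htr.2, hp, hn]
    simp [Gimp]
  · intro h
    have key : ∀ v1 v2 : ℕ → W → ℝ, (∀ p u, v1 p u ∈ Set.Icc (0:ℝ) 1) →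
        (∀ p u, v2 p u ∈ Set.Icc (0:ℝ) 1) →
        (Lbl.eval Rp Rm v1 v2 χ w).1 = 1 ∧ (Lbl.eval Rp Rm v1 v2 χ w).2 = 0 := by
      intro v1 v2 hv1 hv2
      set v : ℕ → W → ℝ := fun p => if p % 2 = 0 then v1 (p/2) else v2 (p/2) with hvdef
      have hv : ∀ p u, v p u ∈ Set.Icc (0:ℝ) 1 := by
        intro p u
        simp only [hvdef]
        split_ifs
        · exact hv1 _ u
        · exact hv2 _ u
      have e1 : ∀ p (u : W), v (2*p) u = v1 p u := by
        intro p u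
        simp only [hvdef]
        rw [if_pos (by omega)]
        congr 1; omega
      have e2 : ∀ p (u : W), v (2*p+1) u = v2 p u := by
        intro p u
        simp only [hvdef]
        rw [if_neg (by omega)]
        congr 1; omega
      have htr := tr_eval Rp Rm v1 v2 v e1 e2 χ w
      have hval := h v hv
      have hbp := eval_mem_Icc Rp Rm hRp hRm v hv χ.tr.1 w
      have hbn := eval_mem_Icc Rp Rm hRp hRm v hv χ.tr.2 w
      rw [htr.1] at hbp
      rw [htr.2] at hbn
      simp only [Fml2.eval, Fml2.snot, Fml2.Zero, Fml2.One, Lbl.pos, Lbl.negt] at hval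
      rw [htr.1, htr.2] at hval
      rw [show Gimp (v 0 w) (v 0 w) = 1 from if_pos le_rfl] at hval
      rw [min_eq_iff] at hval
      have hGle : Gimp (Lbl.eval Rp Rm v1 v2 χ w).2 (1 - 1) ≤ 1 :=
        (Gimp_mem_Icc (by norm_num)).2
      have hG : Gimp (Lbl.eval Rp Rm v1 v2 χ w).2 (1 - 1) = 1 ∧
          (Lbl.eval Rp Rm v1 v2 χ w).1 = 1 := by
        rcases hval with ⟨h1', h2'⟩ | ⟨h1', h2'⟩
        · exact ⟨le_antisymm hGle (by linarith), h1'⟩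
        · exact ⟨h1', le_antisymm hbp.2 (by linarith)⟩
      refine ⟨hG.2, ?_⟩
      have := hG.1
      unfold Gimp at this
      split_ifs at this with hle
      · exact le_antisymm (by linarith) hbn.1
      · norm_num at this
    exact ⟨fun v1 v2 hv1 hv2 => (key v1 v2 hv1 hv2).1,
           fun v1 v2 hv1 hv2 => (key v1 v2 hv1 hv2).2⟩
end
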